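/- Let ρ : g → so_ε(V,( , )) be a finite-dimensional ε-orthogonal representation of a finite-dimensional ε-quadratic colour Lie algebra, with moment map μ and canonical moment map μ_can(u,v)(w) = ε(v,w)(u,w)v − (v,w)u. Then the following are equivalent: (a) R_μ − (1/3)β(R_μ) = R_{μ_can} (V is special ε-orthogonal); (b) μ(A,B)(C) + ε(B,C)μ(A,C)(B) = (A,B)C + ε(B,C)(A,C)B − 2(B,C)A for all homogeneous A,B,C ∈ V; (c) μ(A,B)(C) + ε(B,C)μ(A,C)(B) = μ_can(A,B)(C) + ε(B,C)μ_can(A,C)(B) for all homogeneous A,B,C ∈ V. -/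

import Mathlib

/-!
Put `T(A, B, C) = ρ(μ(A, B)) C`. Nondegeneracy of `Bg` makes `μ` ε-skew, so `T` is ε-skew in its
first two slots, and nondegeneracy of `Bv` turns (a) into the identity `T - β(T)/3 = μ_can` of
`V`-valued maps. The Bianchi map of an ε-skew map is ε-alternating, hence killed by the
symmetrisation `S` in the last two slots; conversely an ε-skew map `D` with `S(D) = 0` is
ε-alternating and so `β(D) = 3 D`. Since `μ_can` is ε-skew with `β(μ_can) = 0`, applying this to
`D = T - μ_can` gives (a) ⇔ `S(T) = S(μ_can)`, which is (c); and (b) is (c) with `S(μ_can)`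
computed.
-/

/-- A commutation factor of an abelian group `Γ` with values in `k`. -/
structure CommutationFactor (k Γ : Type*) [Field k] [AddCommGroup Γ] where
  ε : Γ → Γ → k
  mul_symm : ∀ a b, ε a b * ε b a = 1
  add_fst : ∀ a b c, ε (a + b) c = ε a c * ε b c
  add_snd : ∀ a b c, ε a (b + c) = ε a b * ε a c

theorem LinearMap.SeparatingLeft.eq_of_forall_homogeneous {R M N P ι : Type*} [CommRing R]
    [AddCommGroup M] [Module R M] [AddCommGroup N] [Module R N] [AddCommGroup P] [Module R P]
    [DecidableEq ι] (𝒩 : ι → Submodule R N) [DirectSum.Decomposition 𝒩]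
    {B : M →ₗ[R] N →ₗ[R] P} (hB : B.SeparatingLeft) {v w : M}
    (h : ∀ i, ∀ x ∈ 𝒩 i, B v x = B w x) : v = w :=
  LinearMap.ker_eq_bot.mp (LinearMap.separatingLeft_iff_ker_eq_bot.mp hB) <|
    DirectSum.decompose_lhom_ext 𝒩 fun i => LinearMap.ext fun x => h i x x.2

theorem LinearMap.SeparatingLeft.separatingRight_of_finiteDimensional {K M : Type*} [Field K]
    [AddCommGroup M] [Module K M] [FiniteDimensional K M] {B : M →ₗ[K] M →ₗ[K] K}
    (hB : B.SeparatingLeft) : B.SeparatingRight := by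
  have hsurj : Function.Surjective B :=
    (LinearMap.injective_iff_surjective_of_finrank_eq_finrank Subspace.dual_finrank_eq.symm).mp
      (LinearMap.ker_eq_bot.mp (LinearMap.separatingLeft_iff_ker_eq_bot.mp hB))
  intro y hy
  refine (Module.forall_dual_apply_eq_zero_iff K y).mp fun φ => ?_
  obtain ⟨x, rfl⟩ := hsurj φ
  exact hy x

namespace CommutationFactor

variable {k Γ V Mg : Type*} [Field k] [AddCommGroup Γ] [AddCommGroup V] [Module k V]
  [AddCommGroup Mg] [Module k Mg] (E : CommutationFactor k Γ)

theorem ne_zero (a b : Γ) : E.ε a b ≠ 0 :=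
  left_ne_zero_of_mul_eq_one (E.mul_symm a b)

theorem zero_fst (a : Γ) : E.ε 0 a = 1 := by
  have h := E.add_fst 0 0 a
  rw [add_zero] at h
  exact (mul_eq_left₀ (E.ne_zero 0 a)).mp h.symm

theorem zero_snd (a : Γ) : E.ε a 0 = 1 := by
  have h := E.add_snd a 0 0
  rw [add_zero] at h
  exact (mul_eq_left₀ (E.ne_zero a 0)).mp h.symm

/- A map `T : Γ → Γ → Γ → V → V → V → V` stands for a trilinear map `V × V × V → V`, read only at
homogeneous arguments `A ∈ 𝒱 a`, `B ∈ 𝒱 b`, `C ∈ 𝒱 c` as `T a b c A B C`: the degrees have to be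
carried along because they enter the signs. -/
def bianchi (T : Γ → Γ → Γ → V → V → V → V) : Γ → Γ → Γ → V → V → V → V :=
  fun a b c A B C =>
    T a b c A B C + E.ε a (b + c) • T b c a B C A + E.ε (a + b) c • T c a b C A B

def sym23 (T : Γ → Γ → Γ → V → V → V → V) : Γ → Γ → Γ → V → V → V → V :=
  fun a b c A B C => T a b c A B C + E.ε b c • T a c b A C B

def IsSkew12 (𝒱 : Γ → Submodule k V) (T : Γ → Γ → Γ → V → V → V → V) : Prop :=
  ∀ a b c, ∀ A ∈ 𝒱 a, ∀ B ∈ 𝒱 b, ∀ C ∈ 𝒱 c, T b a c B A C = -E.ε b a • T a b c A B C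

/-- `E.canonical Bv a b c A B C` is `μ_can(A, B)(C)`. -/
def canonical (Bv : V →ₗ[k] V →ₗ[k] k) : Γ → Γ → Γ → V → V → V → V :=
  fun _ b c A B C => (E.ε b c * Bv A C) • B - Bv B C • A

variable {𝒱 : Γ → Submodule k V} {T K : Γ → Γ → Γ → V → V → V → V} {a b c : Γ} {A B C : V}
  {Bv : V →ₗ[k] V →ₗ[k] k} {E}

theorem IsSkew12.sub (hT : E.IsSkew12 𝒱 T) (hK : E.IsSkew12 𝒱 K) : E.IsSkew12 𝒱 (T - K) := by
  intro a b c A hA B hB C hC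
  simp only [Pi.sub_apply, hT a b c A hA B hB C hC, hK a b c A hA B hB C hC, smul_sub]

theorem bianchi_sub (T K : Γ → Γ → Γ → V → V → V → V) :
    E.bianchi (T - K) = E.bianchi T - E.bianchi K := by
  funext a b c A B C
  simp only [bianchi, Pi.sub_apply]
  module

theorem sym23_bianchi (hT : E.IsSkew12 𝒱 T) (hA : A ∈ 𝒱 a) (hB : B ∈ 𝒱 b) (hC : C ∈ 𝒱 c) :
    E.sym23 (E.bianchi T) a b c A B C = 0 := by
  simp only [sym23, bianchi]
  rw [hT b a c B hB A hA C hC, hT c b a C hC B hB A hA, hT c a b C hC A hA B hB, add_comm c b]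
  simp only [E.add_fst, E.add_snd]
  have := E.mul_symm a b
  have := E.mul_symm b c
  have := E.mul_symm a c
  match_scalars <;> grind

theorem bianchi_eq_three_smul (hT : E.IsSkew12 𝒱 T)
    (hS : ∀ a b c, ∀ A ∈ 𝒱 a, ∀ B ∈ 𝒱 b, ∀ C ∈ 𝒱 c, E.sym23 T a b c A B C = 0)
    (hA : A ∈ 𝒱 a) (hB : B ∈ 𝒱 b) (hC : C ∈ 𝒱 c) :
    E.bianchi T a b c A B C = (3 : k) • T a b c A B C := by
  have hBAC := hS b a c B hB A hA C hC
  have hABC := hS a b c A hA B hB C hC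
  rw [sym23, hT a b c A hA B hB C hC] at hBAC
  rw [sym23] at hABC
  have hBCA : T b c a B C A = (E.ε c a * E.ε b a) • T a b c A B C := by
    linear_combination (norm := module) E.ε c a • hBAC - E.mul_symm c a • T b c a B C A
  have hCAB : T c a b C A B = (E.ε c a * E.ε c b) • T a b c A B C := by
    linear_combination (norm := module) hT a c b A hA C hC B hB
      - (E.ε c a * E.ε c b) • hABC + E.ε c a • E.mul_symm c b • T a c b A C B
  simp only [bianchi, hBCA, hCAB, E.add_fst, E.add_snd]
  have := E.mul_symm a b
  have := E.mul_symm b c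
  have := E.mul_symm a c
  match_scalars
  grind

variable (E)

theorem sub_bianchi_eq_iff_sym23_eq (h3 : (3 : k) ≠ 0)
    (hT : E.IsSkew12 𝒱 T) (hK : E.IsSkew12 𝒱 K)
    (hKβ : ∀ a b c, ∀ A ∈ 𝒱 a, ∀ B ∈ 𝒱 b, ∀ C ∈ 𝒱 c, E.bianchi K a b c A B C = 0) :
    (∀ a b c, ∀ A ∈ 𝒱 a, ∀ B ∈ 𝒱 b, ∀ C ∈ 𝒱 c,
      T a b c A B C - (3 : k)⁻¹ • E.bianchi T a b c A B C = K a b c A B C) ↔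
    (∀ a b c, ∀ A ∈ 𝒱 a, ∀ B ∈ 𝒱 b, ∀ C ∈ 𝒱 c,
      E.sym23 T a b c A B C = E.sym23 K a b c A B C) := by
  constructor
  · intro h a b c A hA B hB C hC
    have hβ := sym23_bianchi hT hA hB hC
    rw [sym23] at hβ ⊢
    rw [sym23, ← h a b c A hA B hB C hC, ← h a c b A hA C hC B hB]
    linear_combination (norm := module) (3 : k)⁻¹ • hβ
  · intro h a b c A hA B hB C hC
    have hS : ∀ a b c, ∀ A ∈ 𝒱 a, ∀ B ∈ 𝒱 b, ∀ C ∈ 𝒱 c, E.sym23 (T - K) a b c A B C = 0 := by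
      intro a b c A hA B hB C hC
      have hTK := h a b c A hA B hB C hC
      simp only [sym23, Pi.sub_apply] at hTK ⊢
      linear_combination (norm := module) hTK
    have hD := bianchi_eq_three_smul (hT.sub hK) hS hA hB hC
    simp only [bianchi_sub, Pi.sub_apply, hKβ a b c A hA B hB C hC, sub_zero] at hD
    rw [hD, smul_smul, inv_mul_cancel₀ h3, one_smul, sub_sub_cancel]

theorem eps_add_snd_mul_form
    (hdeg : ∀ a b : Γ, a + b ≠ 0 → ∀ v ∈ 𝒱 a, ∀ w ∈ 𝒱 b, Bv v w = 0)
    (hB : B ∈ 𝒱 b) (hC : C ∈ 𝒱 c) (x : Γ) : E.ε x (b + c) * Bv B C = Bv B C := by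
  by_cases h : b + c = 0
  · rw [h, E.zero_snd, one_mul]
  · rw [hdeg b c h B hB C hC, mul_zero]

theorem eps_add_fst_mul_form
    (hdeg : ∀ a b : Γ, a + b ≠ 0 → ∀ v ∈ 𝒱 a, ∀ w ∈ 𝒱 b, Bv v w = 0)
    (hB : B ∈ 𝒱 b) (hC : C ∈ 𝒱 c) (x : Γ) : E.ε (b + c) x * Bv B C = Bv B C := by
  by_cases h : b + c = 0
  · rw [h, E.zero_fst, one_mul]
  · rw [hdeg b c h B hB C hC, mul_zero]

theorem isSkew12_canonical (hdeg : ∀ a b : Γ, a + b ≠ 0 → ∀ v ∈ 𝒱 a, ∀ w ∈ 𝒱 b, Bv v w = 0) :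
    E.IsSkew12 𝒱 (E.canonical Bv) := by
  intro a b c A hA B hB C hC
  have hBC := E.eps_add_snd_mul_form hdeg hB hC a
  have hAC := E.eps_add_snd_mul_form hdeg hA hC b
  rw [E.add_snd] at hBC hAC
  have := E.mul_symm a b
  have := E.mul_symm b c
  have := E.mul_symm a c
  simp only [canonical]
  match_scalars <;> grind

theorem bianchi_canonical (hdeg : ∀ a b : Γ, a + b ≠ 0 → ∀ v ∈ 𝒱 a, ∀ w ∈ 𝒱 b, Bv v w = 0)
    (hsymm : ∀ a b : Γ, ∀ v ∈ 𝒱 a, ∀ w ∈ 𝒱 b, Bv v w = E.ε a b * Bv w v)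
    (hA : A ∈ 𝒱 a) (hB : B ∈ 𝒱 b) (hC : C ∈ 𝒱 c) :
    E.bianchi (E.canonical Bv) a b c A B C = 0 := by
  have hBC := E.eps_add_snd_mul_form hdeg hB hC a
  have hAC := E.eps_add_snd_mul_form hdeg hA hC b
  have hAB := E.eps_add_fst_mul_form hdeg hA hB c
  rw [E.add_snd] at hBC hAC
  rw [E.add_fst] at hAB
  have := hsymm c b C hC B hB
  have := hsymm c a C hC A hA
  have := hsymm b a B hB A hA
  have := E.mul_symm a b
  have := E.mul_symm b c
  have := E.mul_symm a c
  simp only [bianchi, canonical, E.add_fst, E.add_snd]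
  match_scalars <;> grind

theorem sym23_canonical (hsymm : ∀ a b : Γ, ∀ v ∈ 𝒱 a, ∀ w ∈ 𝒱 b, Bv v w = E.ε a b * Bv w v)
    (hB : B ∈ 𝒱 b) (hC : C ∈ 𝒱 c) :
    E.sym23 (E.canonical Bv) a b c A B C
      = Bv A B • C + (E.ε b c * Bv A C) • B - (2 * Bv B C) • A := by
  have := hsymm c b C hC B hB
  have := E.mul_symm b c
  simp only [sym23, canonical]
  match_scalars <;> grind

theorem forall_form_sub_bianchi_eq_iff [DecidableEq Γ] [DirectSum.Decomposition 𝒱]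
    (hBv : Bv.SeparatingLeft) :
    (∀ d, ∀ D ∈ 𝒱 d,
      Bv (T a b c A B C) D
        - (3 : k)⁻¹ * (Bv (T a b c A B C) D
            + E.ε a (b + c) * Bv (T b c a B C A) D
            + E.ε (a + b) c * Bv (T c a b C A B) D)
        = E.ε b c * Bv A C * Bv B D - Bv B C * Bv A D) ↔
    T a b c A B C - (3 : k)⁻¹ • E.bianchi T a b c A B C = E.canonical Bv a b c A B C := by
  refine ⟨fun h => hBv.eq_of_forall_homogeneous 𝒱 fun d D hD => ?_, fun h d D _ => ?_⟩
  · simpa only [bianchi, canonical, map_sub, map_add, map_smul, LinearMap.sub_apply,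
      LinearMap.add_apply, LinearMap.smul_apply, smul_eq_mul] using h d D hD
  · simpa only [bianchi, canonical, map_sub, map_add, map_smul, LinearMap.sub_apply,
      LinearMap.add_apply, LinearMap.smul_apply, smul_eq_mul] using congrArg (Bv · D) h

theorem moment_swap [FiniteDimensional k Mg] [DecidableEq Γ] {𝒜 : Γ → Submodule k Mg}
    [DirectSum.Decomposition 𝒜] {Bg : Mg →ₗ[k] Mg →ₗ[k] k} (hBg : Bg.SeparatingLeft)
    (hBvsymm : ∀ a b : Γ, ∀ v ∈ 𝒱 a, ∀ w ∈ 𝒱 b, Bv v w = E.ε a b * Bv w v)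
    {ρ : Mg →ₗ[k] Module.End k V} (hρdeg : ∀ a b : Γ, ∀ x ∈ 𝒜 a, ∀ v ∈ 𝒱 b, ρ x v ∈ 𝒱 (a + b))
    (hρskew : ∀ a b : Γ, ∀ x ∈ 𝒜 a, ∀ v ∈ 𝒱 b, ∀ w : V,
      Bv (ρ x v) w + E.ε a b * Bv v (ρ x w) = 0)
    {μ : V →ₗ[k] V →ₗ[k] Mg} (hμ : ∀ (x : Mg) (v w : V), Bg x (μ v w) = Bv (ρ x v) w)
    (hA : A ∈ 𝒱 a) (hB : B ∈ 𝒱 b) :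
    μ B A = -E.ε b a • μ A B := by
  refine (LinearMap.flip_separatingLeft.mpr hBg.separatingRight_of_finiteDimensional)
    |>.eq_of_forall_homogeneous 𝒜 fun g x hx => ?_
  have hswap := hBvsymm (g + b) a _ (hρdeg g b x hx B hB) A hA
  have hskew := hρskew g a x hx A hA B
  simp only [LinearMap.flip_apply, LinearMap.smul_apply, map_smul, smul_eq_mul, hμ, hswap,
    E.add_fst]
  linear_combination E.ε b a * hskew

end CommutationFactor

theorem stmt15_general {k Γ Mg V : Type*} [Field k] [AddCommGroup Γ] [DecidableEq Γ]
    [AddCommGroup Mg] [Module k Mg] [AddCommGroup V] [Module k V]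
    [FiniteDimensional k Mg]
    (h3 : (3 : k) ≠ 0)
    (E : CommutationFactor k Γ)
    (𝒜 : Γ → Submodule k Mg) [DirectSum.Decomposition 𝒜]
    (𝒱 : Γ → Submodule k V) [DirectSum.Decomposition 𝒱]
    (Bg : Mg →ₗ[k] Mg →ₗ[k] k)
    (hBgnd : ∀ x : Mg, (∀ y, Bg x y = 0) → x = 0)
    (Bv : V →ₗ[k] V →ₗ[k] k)
    (hBvdeg : ∀ a b : Γ, a + b ≠ 0 → ∀ v ∈ 𝒱 a, ∀ w ∈ 𝒱 b, Bv v w = 0)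
    (hBvsymm : ∀ a b : Γ, ∀ v ∈ 𝒱 a, ∀ w ∈ 𝒱 b, Bv v w = E.ε a b * Bv w v)
    (hBvnd : ∀ v : V, (∀ w, Bv v w = 0) → v = 0)
    (ρ : Mg →ₗ[k] Module.End k V)
    (hρdeg : ∀ a b : Γ, ∀ x ∈ 𝒜 a, ∀ v ∈ 𝒱 b, ρ x v ∈ 𝒱 (a + b))
    (hρskew : ∀ a b : Γ, ∀ x ∈ 𝒜 a, ∀ v ∈ 𝒱 b, ∀ w : V,
      Bv (ρ x v) w + E.ε a b * Bv v (ρ x w) = 0)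
    (μ : V →ₗ[k] V →ₗ[k] Mg)
    (hμ : ∀ (x : Mg) (v w : V), Bg x (μ v w) = Bv (ρ x v) w)
    :
    List.TFAE [
      (∀ a b c d : Γ, ∀ A ∈ 𝒱 a, ∀ B ∈ 𝒱 b, ∀ C ∈ 𝒱 c, ∀ D ∈ 𝒱 d,
        Bv (ρ (μ A B) C) D
          - (3 : k)⁻¹ * (Bv (ρ (μ A B) C) D
              + E.ε a (b + c) * Bv (ρ (μ B C) A) D
              + E.ε (a + b) c * Bv (ρ (μ C A) B) D)
          = E.ε b c * Bv A C * Bv B D - Bv B C * Bv A D),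
      (∀ a b c : Γ, ∀ A ∈ 𝒱 a, ∀ B ∈ 𝒱 b, ∀ C ∈ 𝒱 c,
        ρ (μ A B) C + E.ε b c • ρ (μ A C) B
          = Bv A B • C + (E.ε b c * Bv A C) • B - (2 * Bv B C) • A),
      (∀ a b c : Γ, ∀ A ∈ 𝒱 a, ∀ B ∈ 𝒱 b, ∀ C ∈ 𝒱 c,
        ρ (μ A B) C + E.ε b c • ρ (μ A C) B
          = ((E.ε b c * Bv A C) • B - Bv B C • A)
            + E.ε b c • ((E.ε c b * Bv A B) • C - Bv C B • A))
    ] := by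
  let T : Γ → Γ → Γ → V → V → V → V := fun _ _ _ A B C => ρ (μ A B) C
  have hT : E.IsSkew12 𝒱 T := fun a b c A hA B hB C hC => by
    simp only [T, E.moment_swap (𝒜 := 𝒜) hBgnd hBvsymm hρdeg hρskew hμ hA hB, map_smul,
      LinearMap.smul_apply]
  tfae_have 1 ↔ 3 := by
    refine Iff.trans ?_ (E.sub_bianchi_eq_iff_sym23_eq h3 hT (E.isSkew12_canonical hBvdeg)
      fun _ _ _ _ hA _ hB _ hC => E.bianchi_canonical hBvdeg hBvsymm hA hB hC)
    exact ⟨fun h a b c A hA B hB C hC => (E.forall_form_sub_bianchi_eq_iff (T := T) hBvnd).mp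
        fun d D hD => h a b c d A hA B hB C hC D hD,
      fun h a b c d A hA B hB C hC D hD =>
        (E.forall_form_sub_bianchi_eq_iff (T := T) hBvnd).mpr (h a b c A hA B hB C hC) d D hD⟩
  tfae_have 2 ↔ 3 := by
    constructor <;> intro h a b c A hA B hB C hC
    · exact (h a b c A hA B hB C hC).trans (E.sym23_canonical (a := a) hBvsymm hB hC).symm
    · exact (h a b c A hA B hB C hC).trans (E.sym23_canonical (a := a) hBvsymm hB hC)
  tfae_finish

/-- Characterisation of special ε-orthogonal representations:
(a) `R_μ − (1/3)β(R_μ) = R_{μ_can}`;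
(b) `μ(A,B)(C) + ε(B,C)μ(A,C)(B) = (A,B)C + ε(B,C)(A,C)B − 2(B,C)A`;
(c) the same symmetrisation of `μ` agrees with that of `μ_can`. -/
theorem stmt15 {k Γ Mg V : Type*} [Field k] [AddCommGroup Γ] [DecidableEq Γ]
    [AddCommGroup Mg] [Module k Mg] [AddCommGroup V] [Module k V]
    [FiniteDimensional k Mg] [FiniteDimensional k V]
    (h2 : (2 : k) ≠ 0) (h3 : (3 : k) ≠ 0)
    (E : CommutationFactor k Γ)
    (𝒜 : Γ → Submodule k Mg) [DirectSum.Decomposition 𝒜]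
    (𝒱 : Γ → Submodule k V) [DirectSum.Decomposition 𝒱]
    (br : Mg →ₗ[k] Mg →ₗ[k] Mg)
    (hbrdeg : ∀ a b : Γ, ∀ x ∈ 𝒜 a, ∀ y ∈ 𝒜 b, br x y ∈ 𝒜 (a + b))
    (hbrskew : ∀ a b : Γ, ∀ x ∈ 𝒜 a, ∀ y ∈ 𝒜 b, br x y = (-(E.ε a b)) • br y x)
    (hjac : ∀ a b c : Γ, ∀ x ∈ 𝒜 a, ∀ y ∈ 𝒜 b, ∀ z ∈ 𝒜 c,
      E.ε c a • br x (br y z) + E.ε a b • br y (br z x)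
        + E.ε b c • br z (br x y) = 0)
    (Bg : Mg →ₗ[k] Mg →ₗ[k] k)
    (hBgdeg : ∀ a b : Γ, a + b ≠ 0 → ∀ x ∈ 𝒜 a, ∀ y ∈ 𝒜 b, Bg x y = 0)
    (hBgsymm : ∀ a b : Γ, ∀ x ∈ 𝒜 a, ∀ y ∈ 𝒜 b, Bg x y = E.ε a b * Bg y x)
    (hBgad : ∀ a b : Γ, ∀ x ∈ 𝒜 a, ∀ y ∈ 𝒜 b, ∀ z : Mg,
      Bg (br x y) z = -(E.ε a b) * Bg y (br x z))
    (hBgnd : ∀ x : Mg, (∀ y, Bg x y = 0) → x = 0)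
    (Bv : V →ₗ[k] V →ₗ[k] k)
    (hBvdeg : ∀ a b : Γ, a + b ≠ 0 → ∀ v ∈ 𝒱 a, ∀ w ∈ 𝒱 b, Bv v w = 0)
    (hBvsymm : ∀ a b : Γ, ∀ v ∈ 𝒱 a, ∀ w ∈ 𝒱 b, Bv v w = E.ε a b * Bv w v)
    (hBvnd : ∀ v : V, (∀ w, Bv v w = 0) → v = 0)
    (ρ : Mg →ₗ[k] Module.End k V)
    (hρdeg : ∀ a b : Γ, ∀ x ∈ 𝒜 a, ∀ v ∈ 𝒱 b, ρ x v ∈ 𝒱 (a + b))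
    (hρmor : ∀ a b : Γ, ∀ x ∈ 𝒜 a, ∀ y ∈ 𝒜 b,
      ρ (br x y) = ρ x * ρ y - E.ε a b • (ρ y * ρ x))
    (hρskew : ∀ a b : Γ, ∀ x ∈ 𝒜 a, ∀ v ∈ 𝒱 b, ∀ w : V,
      Bv (ρ x v) w + E.ε a b * Bv v (ρ x w) = 0)
    (μ : V →ₗ[k] V →ₗ[k] Mg)
    (hμ : ∀ (x : Mg) (v w : V), Bg x (μ v w) = Bv (ρ x v) w)
    :
    List.TFAE [
      (∀ a b c d : Γ, ∀ A ∈ 𝒱 a, ∀ B ∈ 𝒱 b, ∀ C ∈ 𝒱 c, ∀ D ∈ 𝒱 d,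
        Bv (ρ (μ A B) C) D
          - (3 : k)⁻¹ * (Bv (ρ (μ A B) C) D
              + E.ε a (b + c) * Bv (ρ (μ B C) A) D
              + E.ε (a + b) c * Bv (ρ (μ C A) B) D)
          = E.ε b c * Bv A C * Bv B D - Bv B C * Bv A D),
      (∀ a b c : Γ, ∀ A ∈ 𝒱 a, ∀ B ∈ 𝒱 b, ∀ C ∈ 𝒱 c,
        ρ (μ A B) C + E.ε b c • ρ (μ A C) B
          = Bv A B • C + (E.ε b c * Bv A C) • B - (2 * Bv B C) • A),
      (∀ a b c : Γ, ∀ A ∈ 𝒱 a, ∀ B ∈ 𝒱 b, ∀ C ∈ 𝒱 c,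
        ρ (μ A B) C + E.ε b c • ρ (μ A C) B
          = ((E.ε b c * Bv A C) • B - Bv B C • A)
            + E.ε b c • ((E.ε c b * Bv A B) • C - Bv C B • A))
    ] :=
  stmt15_general h3 E 𝒜 𝒱 Bg hBgnd Bv hBvdeg hBvsymm hBvnd ρ hρdeg hρskew μ hμ
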